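/- arXiv:2502.01077 — 3 statements merged into one kernel-verified Lean document; each statement's English description precedes it below -/
import Mathlib

section
/- Let m, n be natural numbers, let Γ, Γ̄ be m×n complex matrices, and let Ω, Ω̄ be m×m positive definite complex matrices. Then Re Tr(Ω⁻¹ Γ Γᴴ) ≥ 2 Re Tr(Ω̄⁻¹ Γ̄ Γᴴ) − Re Tr(Ω̄⁻¹ Γ̄ Γ̄ᴴ Ω̄⁻¹ Ω). -/
open Matrix ComplexOrder

lemma trace_re_nonneg {k : ℕ} {P : Matrix (Fin k) (Fin k) ℂ} (hP : P.PosSemidef) :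
    0 ≤ (Matrix.trace P).re := by
  rw [Matrix.trace, Complex.re_sum]
  apply Finset.sum_nonneg
  intro i _
  have := hP.re_dotProduct_nonneg (Pi.single i 1)
  simpa [dotProduct, Matrix.mulVec, Pi.single_apply, Finset.sum_ite_eq,
    Matrix.diag] using this

/-- Matrix-fractional tangent inequality (Lemma 10 of the paper): for positive definite
`Ω, Ω̄` and arbitrary `Γ, Γ̄`,
`Re Tr(Ω⁻¹ Γ Γᴴ) ≥ 2 Re Tr(Ω̄⁻¹ Γ̄ Γᴴ) − Re Tr(Ω̄⁻¹ Γ̄ Γ̄ᴴ Ω̄⁻¹ Ω)`. -/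
theorem stmt_6 (m n : ℕ) (Γ Γb : Matrix (Fin m) (Fin n) ℂ)
    (Ω Ωb : Matrix (Fin m) (Fin m) ℂ) (hΩ : Ω.PosDef) (hΩb : Ωb.PosDef) :
    2 * (Matrix.trace (Ωb⁻¹ * Γb * Γᴴ)).re -
      (Matrix.trace (Ωb⁻¹ * Γb * Γbᴴ * Ωb⁻¹ * Ω)).re ≤
    (Matrix.trace (Ω⁻¹ * Γ * Γᴴ)).re := by
  have hΩH : Ωᴴ = Ω := hΩ.isHermitian.eq
  have hΩbiH : (Ωb⁻¹)ᴴ = Ωb⁻¹ := (hΩb.posSemidef.inv).isHermitian.eq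
  have hinv : Ω⁻¹ * Ω = 1 := Matrix.nonsing_inv_mul Ω ((Matrix.isUnit_iff_isUnit_det _).1 hΩ.isUnit)
  set D := Γ - Ω * Ωb⁻¹ * Γb with hD
  have h1 : Ω⁻¹ * D = Ω⁻¹ * Γ - Ωb⁻¹ * Γb := by
    rw [hD, Matrix.mul_sub]
    congr 1
    rw [← Matrix.mul_assoc, ← Matrix.mul_assoc, hinv, Matrix.one_mul]
  have h2 : Dᴴ = Γᴴ - Γbᴴ * Ωb⁻¹ * Ω := by
    rw [hD, Matrix.conjTranspose_sub, Matrix.conjTranspose_mul, Matrix.conjTranspose_mul,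
      hΩH, hΩbiH, Matrix.mul_assoc]
  have key : Matrix.trace (Ω⁻¹ * D * Dᴴ)
      = Matrix.trace (Ω⁻¹ * Γ * Γᴴ) - Matrix.trace (Γ * Γbᴴ * Ωb⁻¹)
        - Matrix.trace (Ωb⁻¹ * Γb * Γᴴ)
        + Matrix.trace (Ωb⁻¹ * Γb * Γbᴴ * Ωb⁻¹ * Ω) := by
    rw [h1, h2, Matrix.sub_mul, Matrix.mul_sub, Matrix.mul_sub, Matrix.trace_sub,
      Matrix.trace_sub, Matrix.trace_sub]
    have e1 : Matrix.trace (Ω⁻¹ * Γ * (Γbᴴ * Ωb⁻¹ * Ω))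
        = Matrix.trace (Γ * Γbᴴ * Ωb⁻¹) := by
      rw [Matrix.trace_mul_comm (Ω⁻¹ * Γ) (Γbᴴ * Ωb⁻¹ * Ω), Matrix.mul_assoc,
        ← Matrix.mul_assoc Ω Ω⁻¹, Matrix.mul_nonsing_inv Ω ((Matrix.isUnit_iff_isUnit_det _).1 hΩ.isUnit), Matrix.one_mul,
        Matrix.trace_mul_comm, Matrix.mul_assoc]
    have e2 : Matrix.trace (Ωb⁻¹ * Γb * (Γbᴴ * Ωb⁻¹ * Ω))
        = Matrix.trace (Ωb⁻¹ * Γb * Γbᴴ * Ωb⁻¹ * Ω) := by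
      simp [Matrix.mul_assoc]
    rw [e1, e2]
    ring
  have hstar : Matrix.trace (Γ * Γbᴴ * Ωb⁻¹)
      = star (Matrix.trace (Ωb⁻¹ * Γb * Γᴴ)) := by
    rw [← Matrix.trace_conjTranspose, Matrix.conjTranspose_mul, Matrix.conjTranspose_mul,
      hΩbiH, Matrix.conjTranspose_conjTranspose, Matrix.mul_assoc]
  have hpos : 0 ≤ (Matrix.trace (Ω⁻¹ * D * Dᴴ)).re := by
    rw [Matrix.trace_mul_cycle]
    exact trace_re_nonneg ((hΩ.posSemidef.inv).conjTranspose_mul_mul_same D)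
  rw [key] at hpos
  simp only [Complex.sub_re, Complex.add_re, hstar, Complex.star_def, Complex.conj_re] at hpos
  linarith
end

section
/- Let m, n be natural numbers. The function (Γ, Ω) ↦ Re Tr(Ω⁻¹ Γ Γᴴ) is convex (with respect to the real vector-space structure on pairs of complex matrices) on the convex set { (Γ, Ω) : Γ an m×n complex matrix, Ω an m×m positive definite complex matrix }. -/
/-!
Completing the square, `Re Tr(Ω⁻¹ΓΓᴴ) - (2 Re Tr(XᴴΓ) - Re Tr(XᴴΩX)) = Re Tr(EᴴΩE)` with
`E = X - Ω⁻¹Γ`, which is nonnegative for `Ω` positive definite and vanishes at `X = Ω⁻¹Γ`.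
So the function is the pointwise maximum over `X` of functionals that are linear in `(Γ, Ω)`,
and hence convex.
-/

open Matrix ComplexOrder

theorem ConvexOn.of_forall_le_of_exists_eq {𝕜 E β ι : Type*} [Semiring 𝕜] [PartialOrder 𝕜]
    [AddCommMonoid E] [AddCommMonoid β] [PartialOrder β] [IsOrderedAddMonoid β] [SMul 𝕜 E]
    [Module 𝕜 β] [PosSMulMono 𝕜 β] {s : Set E} {f : E → β} {g : ι → E → β}
    (hs : Convex 𝕜 s) (hg : ∀ i, ConvexOn 𝕜 s (g i)) (hle : ∀ i, ∀ x ∈ s, g i x ≤ f x)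
    (heq : ∀ x ∈ s, ∃ i, g i x = f x) : ConvexOn 𝕜 s f := by
  refine ⟨hs, fun x hx y hy a b ha hb hab => ?_⟩
  obtain ⟨i, hi⟩ := heq _ (hs hx hy ha hb hab)
  calc f (a • x + b • y) = g i (a • x + b • y) := hi.symm
    _ ≤ a • g i x + b • g i y := (hg i).2 hx hy ha hb hab
    _ ≤ a • f x + b • f y := by gcongr <;> exact hle i _ ‹_›

namespace Matrix

open RCLike

variable {𝕜 m n : Type*} [RCLike 𝕜]

theorem convex_setOf_posDef : Convex ℝ {A : Matrix m m 𝕜 | A.PosDef} :=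
  convex_iff_forall_pos.2 fun _ hA _ hB _ _ ha hb _ => (hA.smul ha).add (hB.smul hb)

variable [Fintype m] [DecidableEq m] [Fintype n]

/-- For `X = Ω̄⁻¹Γ̄` this is the right-hand side of the tangent inequality at `(Γ̄, Ω̄)`. -/
def tangentForm (X : Matrix m n 𝕜) : Matrix m n 𝕜 × Matrix m m 𝕜 →ₗ[ℝ] ℝ where
  toFun p := 2 * re (Xᴴ * p.1).trace - re (Xᴴ * p.2 * X).trace
  map_add' p q := by
    simp only [Prod.fst_add, Prod.snd_add, Matrix.mul_add, Matrix.add_mul, trace_add, map_add]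
    ring
  map_smul' r p := by
    simp only [Prod.smul_fst, Prod.smul_snd, Matrix.mul_smul, Matrix.smul_mul, trace_smul,
      smul_re, RingHom.id_apply, smul_eq_mul]
    ring

theorem re_trace_inv_mul_mul_conjTranspose_sub_tangentForm {Ω : Matrix m m 𝕜}
    (hΩ : Ω.IsHermitian) (hdet : IsUnit Ω.det) (Γ X : Matrix m n 𝕜) :
    re (Ω⁻¹ * Γ * Γᴴ).trace - tangentForm X (Γ, Ω) =
      re ((X - Ω⁻¹ * Γ)ᴴ * Ω * (X - Ω⁻¹ * Γ)).trace := by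
  have hsquare : (X - Ω⁻¹ * Γ)ᴴ * Ω * (X - Ω⁻¹ * Γ) =
      Xᴴ * Ω * X - Xᴴ * Γ - (Xᴴ * Γ)ᴴ + Γᴴ * Ω⁻¹ * Γ := by
    simp only [conjTranspose_sub, conjTranspose_mul, hΩ.inv.eq, conjTranspose_conjTranspose,
      Matrix.sub_mul, Matrix.mul_sub, Matrix.mul_assoc, mul_nonsing_inv_cancel_left _ _ hdet,
      nonsing_inv_mul_cancel_left _ _ hdet]
    abel
  have hcycle : (Γᴴ * Ω⁻¹ * Γ).trace = (Ω⁻¹ * Γ * Γᴴ).trace := by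
    rw [trace_mul_cycle, trace_mul_cycle]
  simp only [hsquare, trace_add, trace_sub, trace_conjTranspose, hcycle, map_add, map_sub,
    star_def, conj_re, tangentForm, LinearMap.coe_mk, AddHom.coe_mk]
  ring

theorem PosDef.tangentForm_le {Ω : Matrix m m 𝕜} (hΩ : Ω.PosDef) (Γ X : Matrix m n 𝕜) :
    tangentForm X (Γ, Ω) ≤ re (Ω⁻¹ * Γ * Γᴴ).trace := by
  rw [← sub_nonneg, re_trace_inv_mul_mul_conjTranspose_sub_tangentForm hΩ.isHermitian
    (isUnit_iff_isUnit_det _ |>.mp hΩ.isUnit)]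
  exact (nonneg_iff.mp (hΩ.posSemidef.conjTranspose_mul_mul_same _).trace_nonneg).1

theorem tangentForm_inv_mul {Ω : Matrix m m 𝕜} (hΩ : Ω.IsHermitian) (hdet : IsUnit Ω.det)
    (Γ : Matrix m n 𝕜) : tangentForm (Ω⁻¹ * Γ) (Γ, Ω) = re (Ω⁻¹ * Γ * Γᴴ).trace := by
  have h := re_trace_inv_mul_mul_conjTranspose_sub_tangentForm hΩ hdet Γ (Ω⁻¹ * Γ)
  rwa [sub_self, Matrix.mul_zero, trace_zero, map_zero, sub_eq_zero, eq_comm] at h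

theorem convexOn_re_trace_inv_mul_mul_conjTranspose :
    ConvexOn ℝ {p : Matrix m n 𝕜 × Matrix m m 𝕜 | p.2.PosDef}
      (fun p => re (p.2⁻¹ * p.1 * p.1ᴴ).trace) :=
  have hs : Convex ℝ {p : Matrix m n 𝕜 × Matrix m m 𝕜 | p.2.PosDef} :=
    (convex_setOf_posDef (𝕜 := 𝕜) (m := m)).linear_preimage (LinearMap.snd ℝ _ _)
  .of_forall_le_of_exists_eq hs (fun X => (tangentForm X).convexOn hs)
    (fun X p hp => hp.tangentForm_le p.1 X)
    (fun p hp => ⟨p.2⁻¹ * p.1, tangentForm_inv_mul hp.isHermitian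
      (isUnit_iff_isUnit_det _ |>.mp hp.isUnit) p.1⟩)

end Matrix

/-- The matrix-fractional function `(Γ, Ω) ↦ Re Tr(Ω⁻¹ Γ Γᴴ)` is convex (over ℝ) on the set
of pairs with `Ω` positive definite. -/
theorem stmt_7 (m n : ℕ) :
    ConvexOn ℝ
      {p : Matrix (Fin m) (Fin n) ℂ × Matrix (Fin m) (Fin m) ℂ | p.2.PosDef}
      (fun p => (Matrix.trace (p.2⁻¹ * p.1 * p.1ᴴ)).re) :=
  convexOn_re_trace_inv_mul_mul_conjTranspose
end

section
/- Let m, n be natural numbers, let Γ, Γ̄ be m×n complex matrices, and let Ω, Ω̄ be m×m positive definite complex matrices. Then log(det(I + Ω⁻¹ Γ Γᴴ)) ≥ log(det(I + Ω̄⁻¹ Γ̄ Γ̄ᴴ)) − Re Tr(Ω̄⁻¹ Γ̄ Γ̄ᴴ) + 2 Re Tr(Ω̄⁻¹ Γ̄ Γᴴ) − Re Tr( (Ω̄⁻¹ − (Γ̄ Γ̄ᴴ + Ω̄)⁻¹)ᴴ (Γ Γᴴ + Ω) ), where det(I + Ω⁻¹ΓΓᴴ) and det(I + Ω̄⁻¹Γ̄Γ̄ᴴ)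 are positive real numbers (equal to det(Ω + ΓΓᴴ)/det(Ω) and det(Ω̄ + Γ̄Γ̄ᴴ)/det(Ω̄), respectively) and log is taken of their real parts. -/
/-!
With `P = 1 + Γᴴ Ω⁻¹ Γ` and `Q = 1 + Γ̄ᴴ Ω̄⁻¹ Γ̄`, Sylvester's determinant identity turns both
sides into `log det P` and `log det Q`. Concavity of `log det` at `P` gives
`log det Q - log det P ≤ Re Tr(P⁻¹ Q) - n`. Now `P⁻¹` is the minimal mean-square-error matrix of
the channel `(Γ, Ω)`, so it is dominated (in the Loewner order) by the error matrix of any linear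
receiver; evaluating `Re Tr(Q ·)` on the error matrix of the receiver `Γ̄ᴴ (Γ̄Γ̄ᴴ + Ω̄)⁻¹`, optimal
for `(Γ̄, Ω̄)`, produces exactly the right-hand side.
-/

open Matrix ComplexOrder

namespace Matrix

section LogDet

variable {𝕜 : Type*} [RCLike 𝕜] {n : Type*} [Fintype n] [DecidableEq n]

lemma PosDef.log_re_det_le {Z : Matrix n n 𝕜} (hZ : Z.PosDef) :
    Real.log (RCLike.re Z.det) ≤ RCLike.re Z.trace - Fintype.card n := by
  rw [hZ.isHermitian.det_eq_prod_eigenvalues, hZ.isHermitian.trace_eq_sum_eigenvalues,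
    ← RCLike.ofReal_prod, ← RCLike.ofReal_sum, RCLike.ofReal_re, RCLike.ofReal_re,
    Real.log_prod fun i _ => (hZ.eigenvalues_pos i).ne', ← Finset.card_univ, ← nsmul_one,
    ← Finset.sum_const, ← Finset.sum_sub_distrib]
  exact Finset.sum_le_sum fun i _ => Real.log_le_sub_one_of_pos (hZ.eigenvalues_pos i)

open scoped MatrixOrder in
/-- Concavity of `log det`: its tangent at `B` lies above it. -/
lemma PosDef.log_re_det_sub_log_re_det_le {A B : Matrix n n 𝕜} (hA : A.PosDef) (hB : B.PosDef) :
    Real.log (RCLike.re A.det) - Real.log (RCLike.re B.det) ≤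
      RCLike.re (B⁻¹ * A).trace - Fintype.card n := by
  set R := CFC.sqrt B⁻¹
  have hR : R.IsHermitian := (CFC.sqrt_nonneg B⁻¹).posSemidef.isHermitian
  have hRR : R * R = B⁻¹ := CFC.sqrt_mul_sqrt_self _ hB.inv.posSemidef.nonneg
  have hZ : (R * A * R).PosDef := by
    have hRunit : IsUnit R := isUnit_of_mul_isUnit_left (hRR ▸ hB.inv.isUnit)
    simpa only [star_eq_conjTranspose, hR.eq] using
      (IsUnit.posDef_star_left_conjugate_iff hRunit).mpr hA
  obtain ⟨a, ha, hda⟩ := RCLike.pos_iff_exists_ofReal.mp hA.det_pos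
  obtain ⟨b, hb, hdb⟩ := RCLike.pos_iff_exists_ofReal.mp hB.det_pos
  have hdet : (R * A * R).det = ((b⁻¹ * a : ℝ) : 𝕜) := by
    rw [det_mul, det_mul, mul_right_comm, ← det_mul, hRR, det_nonsing_inv, Ring.inverse_eq_inv',
      ← hda, ← hdb]
    push_cast
    ring
  have htrace : (R * A * R).trace = (B⁻¹ * A).trace := by
    rw [trace_mul_cycle, hRR]
  have := hZ.log_re_det_le
  rw [hdet, htrace, RCLike.ofReal_re, Real.log_mul (inv_pos.2 hb).ne' ha.ne', Real.log_inv] at this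
  rw [← hda, ← hdb, RCLike.ofReal_re, RCLike.ofReal_re]
  linarith

open scoped MatrixOrder in
lemma PosSemidef.trace_mul_nonneg {A B : Matrix n n 𝕜} (hA : A.PosSemidef) (hB : B.PosSemidef) :
    0 ≤ (A * B).trace := by
  have hR : (CFC.sqrt B).IsHermitian := (CFC.sqrt_nonneg B).posSemidef.isHermitian
  rw [← CFC.sqrt_mul_sqrt_self B hB.nonneg, ← mul_assoc, trace_mul_comm, ← mul_assoc]
  have := hA.conjTranspose_mul_mul_same (CFC.sqrt B)
  rw [hR.eq] at this
  exact this.trace_nonneg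

end LogDet

section Algebra

variable {α : Type*} [CommRing α] {m n : Type*} [Fintype m] [Fintype n] [DecidableEq n]

lemma one_add_mul_inv_mul_mul [DecidableEq m] {Ω : Matrix m m α} (hΩ : IsUnit Ω.det)
    (A : Matrix m n α) (B : Matrix n m α) : (1 + B * Ω⁻¹ * A) * B = B * Ω⁻¹ * (A * B + Ω) := by
  simp only [Matrix.add_mul, Matrix.mul_add, Matrix.one_mul, Matrix.mul_assoc,
    nonsing_inv_mul _ hΩ, Matrix.mul_one]
  abel

lemma one_add_mul_inv_mul_mul_mul_inv [DecidableEq m] {Ω : Matrix m m α} {A : Matrix m n α}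
    {B : Matrix n m α} (hΩ : IsUnit Ω.det) (hS : IsUnit (A * B + Ω).det) :
    (1 + B * Ω⁻¹ * A) * (B * (A * B + Ω)⁻¹) = B * Ω⁻¹ := by
  rw [← Matrix.mul_assoc, one_add_mul_inv_mul_mul hΩ, Matrix.mul_assoc, mul_nonsing_inv _ hS,
    Matrix.mul_one]

lemma inv_one_add_mul_inv_mul [DecidableEq m] {Ω : Matrix m m α} {A : Matrix m n α}
    {B : Matrix n m α} (hΩ : IsUnit Ω.det) (hS : IsUnit (A * B + Ω).det) :
    (1 + B * Ω⁻¹ * A)⁻¹ = 1 - B * (A * B + Ω)⁻¹ * A := by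
  refine inv_eq_right_inv ?_
  rw [Matrix.mul_sub, Matrix.mul_one, ← Matrix.mul_assoc, one_add_mul_inv_mul_mul_mul_inv hΩ hS,
    add_sub_cancel_right]

variable [StarRing α]

/-- Error covariance `E[(x - W y)(x - W y)ᴴ]` of the linear estimate `W y` of a white signal `x`
observed as `y = Γ x + z`, with noise `z` of covariance `Ω`. -/
def mseMatrix (Γ : Matrix m n α) (Ω : Matrix m m α) (W : Matrix n m α) : Matrix n n α :=
  (1 - W * Γ) * (1 - W * Γ)ᴴ + W * Ω * Wᴴ

lemma mseMatrix_eq (Γ : Matrix m n α) (Ω : Matrix m m α) (W : Matrix n m α) :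
    mseMatrix Γ Ω W = 1 - W * Γ - Γᴴ * Wᴴ + W * (Γ * Γᴴ + Ω) * Wᴴ := by
  simp only [mseMatrix, conjTranspose_sub, conjTranspose_one, conjTranspose_mul, Matrix.sub_mul,
    Matrix.mul_sub, Matrix.mul_add, Matrix.add_mul, Matrix.one_mul, Matrix.mul_one,
    Matrix.mul_assoc]
  abel

lemma mseMatrix_eq_inv_add [DecidableEq m] {Γ : Matrix m n α} {Ω : Matrix m m α}
    (hΩ : Ω.IsHermitian) (hΩu : IsUnit Ω.det) (hSu : IsUnit (Γ * Γᴴ + Ω).det) (W : Matrix n m α) :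
    mseMatrix Γ Ω W = (1 + Γᴴ * Ω⁻¹ * Γ)⁻¹ +
      (W - Γᴴ * (Γ * Γᴴ + Ω)⁻¹) * (Γ * Γᴴ + Ω) * (W - Γᴴ * (Γ * Γᴴ + Ω)⁻¹)ᴴ := by
  have hS : (Γ * Γᴴ + Ω)⁻¹ᴴ = (Γ * Γᴴ + Ω)⁻¹ :=
    ((isHermitian_mul_conjTranspose_self Γ).add hΩ).inv
  rw [mseMatrix_eq, inv_one_add_mul_inv_mul hΩu hSu]
  simp only [conjTranspose_sub, conjTranspose_mul, conjTranspose_conjTranspose, hS,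
    Matrix.sub_mul, Matrix.mul_sub, Matrix.mul_assoc, mul_nonsing_inv_cancel_left _ _ hSu,
    nonsing_inv_mul_cancel_left _ _ hSu]
  abel

end Algebra

section MSE

variable {𝕜 : Type*} [RCLike 𝕜] {m n : Type*} [Fintype m] [Fintype n]

lemma re_trace_conjTranspose (A : Matrix m m 𝕜) : RCLike.re Aᴴ.trace = RCLike.re A.trace := by
  rw [trace_conjTranspose, RCLike.star_def, RCLike.conj_re]

lemma PosDef.mul_conjTranspose_self_add {Ω : Matrix m m 𝕜} (hΩ : Ω.PosDef) (Γ : Matrix m n 𝕜) :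
    (Γ * Γᴴ + Ω).PosDef :=
  PosDef.posSemidef_add (posSemidef_self_mul_conjTranspose Γ) hΩ

variable [DecidableEq n]

lemma re_trace_mul_mseMatrix {Q : Matrix n n 𝕜} (hQ : Q.IsHermitian) (Γ : Matrix m n 𝕜)
    (Ω : Matrix m m 𝕜) (W : Matrix n m 𝕜) :
    RCLike.re (Q * mseMatrix Γ Ω W).trace = RCLike.re Q.trace - 2 * RCLike.re (Q * W * Γ).trace +
      RCLike.re (Wᴴ * Q * W * (Γ * Γᴴ + Ω)).trace := by
  have hcross : (Q * (Γᴴ * Wᴴ)).trace = (W * Γ * Q)ᴴ.trace := by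
    rw [conjTranspose_mul, conjTranspose_mul, hQ.eq]
  rw [mseMatrix_eq, Matrix.mul_add, Matrix.mul_sub, Matrix.mul_sub, Matrix.mul_one, trace_add,
    trace_sub, trace_sub, hcross, ← Matrix.mul_assoc, ← Matrix.mul_assoc, trace_mul_comm _ Wᴴ,
    ← Matrix.mul_assoc, ← Matrix.mul_assoc]
  simp only [map_add, map_sub, re_trace_conjTranspose, trace_mul_cycle W Γ Q]
  ring

variable [DecidableEq m]

lemma PosDef.one_add_conjTranspose_mul_inv_mul {Ω : Matrix m m 𝕜} (hΩ : Ω.PosDef)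
    (Γ : Matrix m n 𝕜) : (1 + Γᴴ * Ω⁻¹ * Γ).PosDef :=
  PosDef.one.add_posSemidef (hΩ.inv.posSemidef.conjTranspose_mul_mul_same Γ)

lemma PosDef.posSemidef_mseMatrix_sub_inv {Ω : Matrix m m 𝕜} (hΩ : Ω.PosDef) (Γ : Matrix m n 𝕜)
    (W : Matrix n m 𝕜) : (mseMatrix Γ Ω W - (1 + Γᴴ * Ω⁻¹ * Γ)⁻¹).PosSemidef := by
  have hS := hΩ.mul_conjTranspose_self_add Γ
  rw [mseMatrix_eq_inv_add hΩ.isHermitian (hΩ.isUnit.map detMonoidHom)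
    (hS.isUnit.map detMonoidHom), add_sub_cancel_left]
  exact hS.posSemidef.mul_mul_conjTranspose_same _

lemma re_trace_mul_mseMatrix_mmse {Ωb : Matrix m m 𝕜} (hΩb : Ωb.PosDef) (Γ Γb : Matrix m n 𝕜)
    (Ω : Matrix m m 𝕜) :
    RCLike.re ((1 + Γbᴴ * Ωb⁻¹ * Γb) * mseMatrix Γ Ω (Γbᴴ * (Γb * Γbᴴ + Ωb)⁻¹)).trace =
      Fintype.card n + RCLike.re (Ωb⁻¹ * Γb * Γbᴴ).trace - 2 * RCLike.re (Ωb⁻¹ * Γb * Γᴴ).trace +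
        RCLike.re ((Ωb⁻¹ - (Γb * Γbᴴ + Ωb)⁻¹) * (Γ * Γᴴ + Ω)).trace := by
  have hΩu : IsUnit Ωb.det := hΩb.isUnit.map detMonoidHom
  have hS := hΩb.mul_conjTranspose_self_add Γb
  have hSu : IsUnit (Γb * Γbᴴ + Ωb).det := hS.isUnit.map detMonoidHom
  have hQ := (hΩb.one_add_conjTranspose_mul_inv_mul Γb).isHermitian
  have hQW := one_add_mul_inv_mul_mul_mul_inv hΩu hSu
  have hWQW : (Γbᴴ * (Γb * Γbᴴ + Ωb)⁻¹)ᴴ * (1 + Γbᴴ * Ωb⁻¹ * Γb) * (Γbᴴ * (Γb * Γbᴴ + Ωb)⁻¹) =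
      Ωb⁻¹ - (Γb * Γbᴴ + Ωb)⁻¹ := by
    set S := Γb * Γbᴴ + Ωb
    have hΓΓ : Γb * Γbᴴ = S - Ωb := (add_sub_cancel_right _ _).symm
    rw [Matrix.mul_assoc, hQW, conjTranspose_mul, conjTranspose_conjTranspose, hS.isHermitian.inv,
      Matrix.mul_assoc, ← Matrix.mul_assoc Γb, hΓΓ, Matrix.sub_mul, Matrix.mul_sub,
      mul_nonsing_inv _ hΩu, Matrix.mul_one, nonsing_inv_mul_cancel_left _ _ hSu]
  have hcross : Γbᴴ * Ωb⁻¹ * Γ = (Γᴴ * Ωb⁻¹ * Γb)ᴴ := by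
    rw [conjTranspose_mul, conjTranspose_mul, hΩb.isHermitian.inv, conjTranspose_conjTranspose,
      Matrix.mul_assoc]
  rw [re_trace_mul_mseMatrix hQ, hQW, hWQW, trace_add, trace_one, map_add, RCLike.natCast_re,
    hcross, re_trace_conjTranspose, trace_mul_cycle Ωb⁻¹ Γb Γbᴴ, trace_mul_cycle Ωb⁻¹ Γb Γᴴ]

end MSE

end Matrix

/-- Log-det minorizer (Lemma 9 of the paper): for positive definite `Ω, Ω̄` and arbitrary
`Γ, Γ̄`,
`log det(I + Ω⁻¹ΓΓᴴ) ≥ log det(I + Ω̄⁻¹Γ̄Γ̄ᴴ) − Re Tr(Ω̄⁻¹Γ̄Γ̄ᴴ) + 2 Re Tr(Ω̄⁻¹Γ̄Γᴴ)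
  − Re Tr((Ω̄⁻¹ − (Γ̄Γ̄ᴴ + Ω̄)⁻¹)ᴴ (ΓΓᴴ + Ω))`,
where the logarithms are taken of the (positive) real parts of the determinants. -/
theorem stmt_8 (m n : ℕ) (Γ Γb : Matrix (Fin m) (Fin n) ℂ)
    (Ω Ωb : Matrix (Fin m) (Fin m) ℂ) (hΩ : Ω.PosDef) (hΩb : Ωb.PosDef) :
    Real.log ((Matrix.det (1 + Ωb⁻¹ * Γb * Γbᴴ)).re) -
      (Matrix.trace (Ωb⁻¹ * Γb * Γbᴴ)).re +
      2 * (Matrix.trace (Ωb⁻¹ * Γb * Γᴴ)).re -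
      (Matrix.trace ((Ωb⁻¹ - (Γb * Γbᴴ + Ωb)⁻¹)ᴴ * (Γ * Γᴴ + Ω))).re ≤
    Real.log ((Matrix.det (1 + Ω⁻¹ * Γ * Γᴴ)).re) := by
  have sylvester (G : Matrix (Fin m) (Fin n) ℂ) (O : Matrix (Fin m) (Fin m) ℂ) :
      det (1 + O * G * Gᴴ) = det (1 + Gᴴ * O * G) := by
    rw [det_one_add_mul_comm, Matrix.mul_assoc]
  have hP := hΩ.one_add_conjTranspose_mul_inv_mul Γ
  have hQ := hΩb.one_add_conjTranspose_mul_inv_mul Γb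
  have htangent := hQ.log_re_det_sub_log_re_det_le hP
  have hmmse := (RCLike.nonneg_iff.mp <| hQ.posSemidef.trace_mul_nonneg <|
    hΩ.posSemidef_mseMatrix_sub_inv Γ (Γbᴴ * (Γb * Γbᴴ + Ωb)⁻¹)).1
  rw [Matrix.mul_sub, trace_sub, map_sub, re_trace_mul_mseMatrix_mmse hΩb] at hmmse
  rw [trace_mul_comm] at htangent
  rw [sylvester, sylvester,
    (hΩb.inv.isHermitian.sub (hΩb.mul_conjTranspose_self_add Γb).inv.isHermitian).eq]
  simp only [RCLike.re_to_complex, Fintype.card_fin] at htangent hmmse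
  linarith
end
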